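/- arXiv:1807.06982 — 2 statements merged into one kernel-verified Lean document; each statement's English description precedes it below -/
import Mathlib

section
/- Let $q_{2k+1}(t) := \sum_{i=0}^{k} B_i^{(2k+1)}(t)$ where $B_i^{(n)}$ are the Bernstein polynomials. Then for every $m = 1, \dots, k$, the $m$-th derivative of $q_{2k+1}$ vanishes at both endpoints: $q_{2k+1}^{(m)}(0) = q_{2k+1}^{(m)}(1) = 0$. -/
open Polynomial

/-- The partial sum of the first `k+1` Bernstein polynomials of degree `2k+1`. -/
noncomputable def qPoly (k : ℕ) : Polynomial ℝ :=
  ∑ i ∈ Finset.range (k + 1), bernsteinPolynomial ℝ (2 * k + 1) i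

/-!
`B_ν^{(n)}` has a zero of order `ν` at `0` and of order `n - ν` at `1`. Every summand of
`q_{2k+1}` has a zero of order at least `k + 1` at `1`, and since the Bernstein polynomials sum
to `1`, so does every summand of `1 - q_{2k+1}` at `0`.
-/

namespace bernsteinPolynomial

variable {R : Type*} [CommRing R]

theorem iterate_derivative_sum_eval_zero {n m : ℕ} {s : Finset ℕ} (h : ∀ ν ∈ s, m < ν) :
    (derivative^[m] (∑ ν ∈ s, bernsteinPolynomial R n ν)).eval 0 = 0 := by
  rw [iterate_derivative_sum, eval_finsetSum]
  exact Finset.sum_eq_zero fun ν hν => iterate_derivative_at_0_eq_zero_of_lt R n (h ν hν)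

theorem iterate_derivative_sum_eval_one {n m : ℕ} {s : Finset ℕ} (h : ∀ ν ∈ s, m < n - ν) :
    (derivative^[m] (∑ ν ∈ s, bernsteinPolynomial R n ν)).eval 1 = 0 := by
  rw [iterate_derivative_sum, eval_finsetSum]
  exact Finset.sum_eq_zero fun ν hν => iterate_derivative_at_1_eq_zero_of_lt R n (h ν hν)

theorem sum_range_eq_one_sub {n j : ℕ} (hj : j ≤ n + 1) :
    ∑ ν ∈ Finset.range j, bernsteinPolynomial R n ν =
      1 - ∑ ν ∈ Finset.Ico j (n + 1), bernsteinPolynomial R n ν := by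
  rw [eq_sub_iff_add_eq, Finset.sum_range_add_sum_Ico _ hj, sum]

end bernsteinPolynomial

theorem qPoly_deriv_vanish_at_endpoints (k m : ℕ) (hm1 : 1 ≤ m) (hmk : m ≤ k) :
    ((Polynomial.derivative)^[m] (qPoly k)).eval 0 = 0 ∧
      ((Polynomial.derivative)^[m] (qPoly k)).eval 1 = 0 := by
  constructor
  · rw [qPoly, bernsteinPolynomial.sum_range_eq_one_sub (by omega), iterate_derivative_sub,
      iterate_derivative_one hm1, zero_sub, eval_neg,
      bernsteinPolynomial.iterate_derivative_sum_eval_zero, neg_zero]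
    intro ν hν
    rw [Finset.mem_Ico] at hν
    omega
  · refine bernsteinPolynomial.iterate_derivative_sum_eval_one fun ν hν => ?_
    rw [Finset.mem_range] at hν
    omega
end

section
/- Let $u : [-1,1] \to \mathbb{R}$ be $M$ times continuously differentiable, vanishing together with its first $M-1$ derivatives at $\pm 1$, and suppose $|u^{(M)}(x)| \le C$ for all $x$. Then for all $\ell \geq 2M$, $\left| \int_{-1}^1 u(x) P_\ell(x)\, dx \right| \leq \frac{2^M \cdot 2 C}{(2\ell - 2M + 1)^M}$; in particular this integral is $O(\ell^{-M})$ as $\ell \to \infty$. -/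
/-! Integrating by parts against `(2n+3) P_{n+1} = (P_{n+2} - P_n)'`, with no boundary terms since
`u(±1) = 0`, expresses `∫ u P_{n+1}` as `(∫ u' P_n - ∫ u' P_{n+2}) / (2n+3)`. Iterating `M` times
costs a factor `2 / (2ℓ - 2M + 1)` per step, and the remaining integrals `∫ u^{(M)} P_m` are at
most `2C` because `|P_m| ≤ 1` on `[-1, 1]`. That bound comes from Legendre's equation: the
function `m(m+1) P_m² + (1 - x²) P_m'²` has derivative `2x P_m'²`, so on `[-1, 1]` it is largest
at `±1`, where it equals `m(m+1)`. -/

open Polynomial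

/-- The Legendre polynomial `P_ℓ`, via Rodrigues' formula. -/
noncomputable def legendreP (ℓ : ℕ) : Polynomial ℝ :=
  ((2 ^ ℓ * Nat.factorial ℓ : ℝ))⁻¹ • (Polynomial.derivative)^[ℓ] ((X ^ 2 - 1) ^ ℓ)

section Rodrigues

variable {R : Type*} [CommRing R]

theorem derivative_X_sq_sub_one_pow_succ (n : ℕ) :
    derivative ((X ^ 2 - 1 : R[X]) ^ (n + 1)) = 2 * ((n : R[X]) + 1) * X * (X ^ 2 - 1) ^ n := by
  rw [derivative_pow_succ]
  simp only [derivative_sub, derivative_X_pow, derivative_one, map_add, map_natCast, map_one]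
  push_cast
  ring

theorem X_sq_sub_one_mul_derivative_X_sq_sub_one_pow (n : ℕ) :
    (X ^ 2 - 1) * derivative ((X ^ 2 - 1 : R[X]) ^ n) = 2 * (n : R[X]) * X * (X ^ 2 - 1) ^ n := by
  cases n with
  | zero => simp
  | succ n => rw [derivative_X_sq_sub_one_pow_succ]; push_cast; ring

theorem iterate_derivative_two_X_sq_sub_one_pow_add_two (n : ℕ) :
    derivative^[2] ((X ^ 2 - 1 : R[X]) ^ (n + 2)) =
      (2 * (n + 2) * (2 * n + 3)) • (X ^ 2 - 1) ^ (n + 1)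
        + (4 * (n + 1) * (n + 2)) • (X ^ 2 - 1) ^ n := by
  rw [Function.iterate_succ_apply, Function.iterate_one, derivative_X_sq_sub_one_pow_succ,
    derivative_mul, derivative_X_sq_sub_one_pow_succ]
  simp only [derivative_mul, derivative_X, derivative_ofNat, derivative_natCast, derivative_add,
    derivative_one, nsmul_eq_mul]
  push_cast
  ring

theorem iterate_derivative_X_sq_sub_one_pow_add_two (n : ℕ) :
    derivative^[n + 3] ((X ^ 2 - 1 : R[X]) ^ (n + 2)) =
      (2 * (n + 2) * (2 * n + 3)) • derivative^[n + 1] ((X ^ 2 - 1) ^ (n + 1))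
        + (4 * (n + 1) * (n + 2)) • derivative^[n + 1] ((X ^ 2 - 1) ^ n) := by
  rw [show n + 3 = n + 1 + 2 from rfl, Function.iterate_add_apply,
    iterate_derivative_two_X_sq_sub_one_pow_add_two,
    iterate_map_add, iterate_derivative_smul, iterate_derivative_smul]

theorem legendre_ode_iterate_derivative_X_sq_sub_one_pow (n : ℕ) :
    (X ^ 2 - 1) * derivative^[n + 2] ((X ^ 2 - 1 : R[X]) ^ n)
      + 2 * X * derivative^[n + 1] ((X ^ 2 - 1) ^ n)
      = (n * (n + 1) : R[X]) * derivative^[n] ((X ^ 2 - 1) ^ n) := by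
  have pearson := congrArg derivative (X_sq_sub_one_mul_derivative_X_sq_sub_one_pow (R := R) n)
  set q : R[X] := (X ^ 2 - 1) ^ n
  have hD : derivative^[2] q * X ^ 2 - derivative^[2] q + 2 • (derivative q * X)
      = (2 * n) • q + (2 * n) • (derivative q * X) := by
    simp only [derivative_mul, derivative_sub, derivative_X_sq, map_ofNat, derivative_one,
      derivative_natCast, derivative_ofNat, derivative_X] at pearson
    simp only [Function.iterate_succ, Function.iterate_zero, Function.comp_apply, id, nsmul_eq_mul]
    push_cast
    linear_combination pearson
  have h := congrArg (derivative^[n]) hD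
  simp only [iterate_derivative_sub, iterate_map_add, iterate_derivative_derivative_mul_X_sq,
    iterate_derivative_derivative_mul_X, iterate_derivative_smul,
    ← Function.iterate_add_apply] at h
  cases n with
  | zero => simp at h ⊢; linear_combination h
  | succ n =>
    simp only [nsmul_eq_mul, Nat.add_sub_cancel] at h
    push_cast at h ⊢
    linear_combination h

theorem eval_iterate_derivative_X_sub_C_pow_mul (a : R) (f : R[X]) (n : ℕ) :
    eval a (derivative^[n] ((X - C a) ^ n * f)) = n.factorial * eval a f := by
  induction n generalizing f with
  | zero => simp
  | succ n ih =>
    have hD : derivative ((X - C a) ^ (n + 1) * f)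
        = (X - C a) ^ n * ((n + 1 : R[X]) * f + (X - C a) * derivative f) := by
      rw [derivative_mul, derivative_X_sub_C_pow]
      simp only [map_natCast, Nat.add_sub_cancel]
      push_cast
      ring
    rw [Function.iterate_succ_apply, hD, ih]
    simp [Nat.factorial_succ]
    ring

end Rodrigues

theorem legendreP_eq_C_mul (n : ℕ) :
    legendreP n = C (2 ^ n * n.factorial : ℝ)⁻¹ * derivative^[n] ((X ^ 2 - 1) ^ n) := by
  rw [legendreP, smul_eq_C_mul]

theorem eval_one_legendreP (n : ℕ) : (legendreP n).eval 1 = 1 := by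
  have h : (X ^ 2 - 1 : ℝ[X]) ^ n = (X - C 1) ^ n * (X + 1) ^ n := by
    rw [← mul_pow]; congr 1; simp; ring
  rw [legendreP_eq_C_mul, eval_mul, eval_C, h, eval_iterate_derivative_X_sub_C_pow_mul]
  norm_num
  field_simp

theorem eval_neg_one_legendreP (n : ℕ) : (legendreP n).eval (-1) = (-1) ^ n := by
  have h : (X ^ 2 - 1 : ℝ[X]) ^ n = (X - C (-1)) ^ n * (X - 1) ^ n := by
    rw [← mul_pow]; congr 1; simp; ring
  rw [legendreP_eq_C_mul, eval_mul, eval_C, h, eval_iterate_derivative_X_sub_C_pow_mul]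
  norm_num
  rw [show (-2 : ℝ) = -1 * 2 by norm_num, mul_pow]
  field_simp

theorem derivative_legendreP_add_two (n : ℕ) :
    derivative (legendreP (n + 2))
      = derivative (legendreP n) + (2 * n + 3 : ℝ) • legendreP (n + 1) := by
  simp only [legendreP, derivative_smul, ← Function.iterate_succ_apply' derivative,
    iterate_derivative_X_sq_sub_one_pow_add_two]
  rw [Nat.factorial_succ, Nat.factorial_succ]
  match_scalars <;> field_simp <;> ring

theorem legendreP_ode (n : ℕ) :
    (X ^ 2 - 1) * derivative (derivative (legendreP n)) + 2 * X * derivative (legendreP n)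
      = C (n * (n + 1) : ℝ) * legendreP n := by
  have h := legendre_ode_iterate_derivative_X_sq_sub_one_pow (R := ℝ) n
  simp only [legendreP_eq_C_mul, derivative_C_mul, ← Function.iterate_succ_apply' derivative,
    map_mul, map_add, map_natCast, map_one]
  linear_combination C (2 ^ n * n.factorial : ℝ)⁻¹ * h

section LegendreODE

variable {p : ℝ[X]} {k : ℝ}

theorem hasDerivAt_sonin
    (hp : (X ^ 2 - 1) * derivative (derivative p) + 2 * X * derivative p = C k * p) (y : ℝ) :
    HasDerivAt (fun y ↦ k * p.eval y ^ 2 + (1 - y ^ 2) * (derivative p).eval y ^ 2)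
      (2 * y * (derivative p).eval y ^ 2) y := by
  have hode := congrArg (eval y) hp
  simp only [eval_add, eval_mul, eval_sub, eval_pow, eval_X, eval_one, eval_C, eval_ofNat] at hode
  have h := (((p.hasDerivAt y).pow 2).const_mul k).add
    (((hasDerivAt_pow 2 y).const_sub 1).mul ((derivative p).hasDerivAt y |>.pow 2))
  refine h.congr_deriv ?_
  simp only [Pi.pow_apply, Nat.cast_ofNat, Nat.add_one_sub_one, pow_one]
  linear_combination (-2 * (derivative p).eval y) * hode

theorem sq_eval_le_max_of_legendre_ode
    (hp : (X ^ 2 - 1) * derivative (derivative p) + 2 * X * derivative p = C k * p)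
    (hk : 0 < k) {x : ℝ} (hx : x ∈ Set.Icc (-1) 1) :
    p.eval x ^ 2 ≤ max (p.eval (-1) ^ 2) (p.eval 1 ^ 2) := by
  set g := fun y ↦ k * p.eval y ^ 2 + (1 - y ^ 2) * (derivative p).eval y ^ 2
  have hg : Differentiable ℝ g := fun y ↦ (hasDerivAt_sonin hp y).differentiableAt
  have hg_mono : MonotoneOn g (Set.Icc 0 1) := by
    refine monotoneOn_of_deriv_nonneg (convex_Icc 0 1) hg.continuous.continuousOn
      hg.differentiableOn fun y hy ↦ ?_
    rw [(hasDerivAt_sonin hp y).deriv]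
    have : 0 ≤ y := (interior_subset hy : y ∈ Set.Icc (0 : ℝ) 1).1
    positivity
  have hg_anti : AntitoneOn g (Set.Icc (-1) 0) := by
    refine antitoneOn_of_deriv_nonpos (convex_Icc (-1) 0) hg.continuous.continuousOn
      hg.differentiableOn fun y hy ↦ ?_
    rw [(hasDerivAt_sonin hp y).deriv]
    have : y ≤ 0 := (interior_subset hy : y ∈ Set.Icc (-1 : ℝ) 0).2
    nlinarith [sq_nonneg ((derivative p).eval y)]
  have hgx : k * p.eval x ^ 2 ≤ g x := by
    have : 0 ≤ (1 - x ^ 2) * (derivative p).eval x ^ 2 := by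
      have : 0 ≤ 1 - x ^ 2 := by nlinarith [hx.1, hx.2]
      positivity
    simp only [g]; linarith
  refine le_of_mul_le_mul_left ?_ hk
  rcases le_total x 0 with hx0 | hx0
  · have := hg_anti ⟨le_rfl, by norm_num⟩ ⟨hx.1, hx0⟩ hx.1
    simp only [g] at this
    norm_num at this
    nlinarith [le_max_left (p.eval (-1) ^ 2) (p.eval 1 ^ 2)]
  · have := hg_mono ⟨hx0, hx.2⟩ ⟨zero_le_one, le_rfl⟩ hx.2
    simp only [g] at this
    norm_num at this
    nlinarith [le_max_right (p.eval (-1) ^ 2) (p.eval 1 ^ 2)]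

end LegendreODE

theorem abs_eval_legendreP_le_one (n : ℕ) {x : ℝ} (hx : x ∈ Set.Icc (-1) 1) :
    |(legendreP n).eval x| ≤ 1 := by
  rcases Nat.eq_zero_or_pos n with rfl | hn
  · simp [legendreP]
  have hk : (0 : ℝ) < n * (n + 1) := by positivity
  have h := sq_eval_le_max_of_legendre_ode (legendreP_ode n) hk hx
  rw [eval_one_legendreP, eval_neg_one_legendreP, ← pow_mul, pow_mul', neg_one_sq] at h
  simpa using h

theorem integral_mul_eval_derivative_eq_neg {u : ℝ → ℝ} (hu : ContDiff ℝ 1 u)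
    (hu_neg_one : u (-1) = 0) (hu_one : u 1 = 0) (V : ℝ[X]) :
    ∫ x in (-1 : ℝ)..1, u x * (derivative V).eval x
      = -∫ x in (-1 : ℝ)..1, deriv u x * V.eval x := by
  have hdu : Continuous (deriv u) := hu.continuous_deriv le_rfl
  rw [intervalIntegral.integral_mul_deriv_eq_deriv_mul
    (fun x _ ↦ (hu.differentiable one_ne_zero x).hasDerivAt) (fun x _ ↦ V.hasDerivAt x)
    (hdu.intervalIntegrable _ _) ((derivative V).continuous.intervalIntegrable _ _),
    hu_neg_one, hu_one]
  ring

theorem integral_mul_legendreP_succ {u : ℝ → ℝ} (hu : ContDiff ℝ 1 u)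
    (hu_neg_one : u (-1) = 0) (hu_one : u 1 = 0) (n : ℕ) :
    (2 * n + 3) * ∫ x in (-1 : ℝ)..1, u x * (legendreP (n + 1)).eval x
      = (∫ x in (-1 : ℝ)..1, deriv u x * (legendreP n).eval x)
        - ∫ x in (-1 : ℝ)..1, deriv u x * (legendreP (n + 2)).eval x := by
  have hdu : Continuous (deriv u) := hu.continuous_deriv le_rfl
  have hint (m : ℕ) :
      IntervalIntegrable (fun x ↦ deriv u x * (legendreP m).eval x) MeasureTheory.volume (-1) 1 :=
    (hdu.mul (legendreP m).continuous).intervalIntegrable _ _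
  calc (2 * n + 3) * ∫ x in (-1 : ℝ)..1, u x * (legendreP (n + 1)).eval x
      = ∫ x in (-1 : ℝ)..1, u x * (derivative (legendreP (n + 2) - legendreP n)).eval x := by
        rw [← intervalIntegral.integral_const_mul, derivative_sub, derivative_legendreP_add_two]
        simp only [add_sub_cancel_left, eval_smul, smul_eq_mul]
        ring_nf
    _ = -∫ x in (-1 : ℝ)..1, deriv u x * (legendreP (n + 2) - legendreP n).eval x :=
        integral_mul_eval_derivative_eq_neg hu hu_neg_one hu_one _
    _ = _ := by
        simp only [eval_sub, mul_sub]
        rw [intervalIntegral.integral_sub (hint _) (hint _)]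
        ring

theorem abs_integral_mul_legendreP_le {u : ℝ → ℝ} {C : ℝ}
    (hC : ∀ x ∈ Set.Icc (-1 : ℝ) 1, |u x| ≤ C) (ℓ : ℕ) :
    |∫ x in (-1 : ℝ)..1, u x * (legendreP ℓ).eval x| ≤ 2 * C := by
  have h := intervalIntegral.norm_integral_le_of_norm_le_const (a := -1) (b := 1)
    (f := fun x ↦ u x * (legendreP ℓ).eval x) (C := C) fun x hx ↦ by
      have hx : x ∈ Set.Icc (-1 : ℝ) 1 := Set.Ioc_subset_Icc_self (by simpa using hx)
      rw [Real.norm_eq_abs, abs_mul]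
      exact (mul_le_of_le_one_right (abs_nonneg _) (abs_eval_legendreP_le_one ℓ hx)).trans
        (hC x hx)
  norm_num at h
  linarith

theorem abs_le_of_legendre_recurrence {c c' : ℕ → ℝ} {M : ℕ} {C : ℝ}
    (hrec : ∀ n : ℕ, (2 * n + 3) * c (n + 1) = c' n - c' (n + 2))
    (hc' : ∀ n, 2 * M ≤ n → |c' n| ≤ 2 ^ M * 2 * C / (2 * n - 2 * M + 1 : ℝ) ^ M)
    {ℓ : ℕ} (hℓ : 2 * (M + 1) ≤ ℓ) :
    |c ℓ| ≤ 2 ^ (M + 1) * 2 * C / (2 * ℓ - 2 * (M + 1) + 1 : ℝ) ^ (M + 1) := by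
  obtain ⟨n, rfl⟩ : ∃ n, ℓ = n + 1 := ⟨ℓ - 1, by omega⟩
  set d : ℝ := 2 * n - 2 * M + 1
  have hnM : (2 * M + 1 : ℝ) ≤ n := by exact_mod_cast (by omega : 2 * M + 1 ≤ n)
  have hd_pos : 0 < d := by linarith
  have hK : 0 ≤ 2 ^ M * 2 * C := by
    have h := (abs_nonneg _).trans (hc' (2 * M) le_rfl)
    have hpos : (0 : ℝ) < (2 * ((2 * M : ℕ) : ℝ) - 2 * M + 1) ^ M := by
      apply pow_pos; push_cast; linarith
    simpa using (le_div_iff₀ hpos).mp h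
  have hc'_n : |c' n| ≤ 2 ^ M * 2 * C / d ^ M := hc' n (by omega)
  have hc'_n2 : |c' (n + 2)| ≤ 2 ^ M * 2 * C / d ^ M := by
    refine (hc' (n + 2) (by omega)).trans (div_le_div_of_nonneg_left hK (by positivity) ?_)
    exact pow_le_pow_left₀ hd_pos.le (by push_cast; linarith) M
  have hc : |c (n + 1)| = |c' n - c' (n + 2)| / (2 * n + 3) := by
    rw [← hrec, abs_mul, abs_of_pos (by positivity : (0 : ℝ) < 2 * n + 3)]
    field_simp
  calc |c (n + 1)| ≤ 2 * (2 ^ M * 2 * C / d ^ M) / (2 * n + 3) := by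
        rw [hc]
        gcongr
        linarith [abs_sub (c' n) (c' (n + 2))]
    _ ≤ 2 * (2 ^ M * 2 * C / d ^ M) / d := by
        gcongr
        linarith [(Nat.cast_nonneg M : (0 : ℝ) ≤ M)]
    _ = _ := by
        rw [show 2 * ((n + 1 : ℕ) : ℝ) - 2 * ((M : ℝ) + 1) + 1 = d by push_cast; ring]
        field_simp
        ring

theorem legendre_coefficient_decay_general (M : ℕ) (u : ℝ → ℝ)
    (hu : ContDiff ℝ M u)
    (hvanish : ∀ m < M, iteratedDeriv m u (-1) = 0 ∧ iteratedDeriv m u 1 = 0)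
    (C : ℝ) (hC : ∀ x ∈ Set.Icc (-1:ℝ) 1, |iteratedDeriv M u x| ≤ C)
    (ℓ : ℕ) (hℓ : 2 * M ≤ ℓ) :
    |∫ x in (-1:ℝ)..1, u x * (legendreP ℓ).eval x| ≤
      2 ^ M * 2 * C / (2 * ℓ - 2 * M + 1 : ℝ) ^ M := by
  induction M generalizing u ℓ with
  | zero => simpa using abs_integral_mul_legendreP_le (by simpa using hC) ℓ
  | succ M ih =>
    have hu₁ : ContDiff ℝ 1 u := hu.of_le (by exact_mod_cast Nat.le_add_left 1 M)
    have hu' : ContDiff ℝ M (deriv u) := by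
      rw [Nat.cast_add, Nat.cast_one, contDiff_succ_iff_deriv] at hu
      exact hu.2.2
    have hvanish' (m : ℕ) (hm : m < M) :
        iteratedDeriv m (deriv u) (-1) = 0 ∧ iteratedDeriv m (deriv u) 1 = 0 := by
      simpa only [iteratedDeriv_succ'] using hvanish (m + 1) (by omega)
    have hC' (x : ℝ) (hx : x ∈ Set.Icc (-1 : ℝ) 1) : |iteratedDeriv M (deriv u) x| ≤ C := by
      simpa only [iteratedDeriv_succ'] using hC x hx
    obtain ⟨hu_neg_one, hu_one⟩ : u (-1) = 0 ∧ u 1 = 0 := by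
      simpa using hvanish 0 M.succ_pos
    have h := abs_le_of_legendre_recurrence
      (c := fun n ↦ ∫ x in (-1 : ℝ)..1, u x * (legendreP n).eval x)
      (integral_mul_legendreP_succ hu₁ hu_neg_one hu_one)
      (fun n hn ↦ ih (deriv u) hu' hvanish' hC' n hn) hℓ
    push_cast
    exact h

theorem legendre_coefficient_decay (M : ℕ) (hM : 1 ≤ M) (u : ℝ → ℝ)
    (hu : ContDiff ℝ M u)
    (hvanish : ∀ m < M, iteratedDeriv m u (-1) = 0 ∧ iteratedDeriv m u 1 = 0)
    (C : ℝ) (hC : ∀ x ∈ Set.Icc (-1:ℝ) 1, |iteratedDeriv M u x| ≤ C)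
    (ℓ : ℕ) (hℓ : 2 * M ≤ ℓ) :
    |∫ x in (-1:ℝ)..1, u x * (legendreP ℓ).eval x| ≤
      2 ^ M * 2 * C / (2 * ℓ - 2 * M + 1 : ℝ) ^ M :=
  legendre_coefficient_decay_general M u hu hvanish C hC ℓ hℓ
end
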